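/- arXiv:2304.14392 — 7 statements merged into one kernel-verified Lean document; each statement's English description precedes it below -/
import Mathlib

section
/- Let Φ = (φ_0, …, φ_d) ∈ ℝ^{d+1} be an antisymmetric phase list. Then there exist a real polynomial P with deg P ≤ d and parity d mod 2 and a complex polynomial Q with deg Q ≤ d−1 and parity (d−1) mod 2 satisfying P(x)² + (1−x²)·|Q(x)|² = 1 for all x ∈ [-1,1], such that for every x ∈ [-1,1], U_Φ(x) equals the 2×2 matrix with both diagonal entries P(x), top-right entry √(1−x²)·Q(x), and bottom-left entry −√(1−x²)·conj(Q(x)); in particular both diagonal entries of U_Φ(x) are equal and real for every x ∈ [-1,1]. -/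
open Matrix Polynomial

/-- The single-qubit Z-rotation `Z(φ) = diag(e^{iφ}, e^{-iφ})`. -/
noncomputable def Zrot (φ : ℝ) : Matrix (Fin 2) (Fin 2) ℂ :=
  !![Complex.exp (Complex.I * (φ : ℂ)), 0; 0, Complex.exp (-(Complex.I * (φ : ℂ)))]

/-- The QSP signal oracle `W(x)`, with diagonal entries `x` and off-diagonal
entries `i·√(1-x²)`. -/
noncomputable def Wosc (x : ℝ) : Matrix (Fin 2) (Fin 2) ℂ :=
  !![(x : ℂ), Complex.I * (Real.sqrt (1 - x ^ 2) : ℂ);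
     Complex.I * (Real.sqrt (1 - x ^ 2) : ℂ), (x : ℂ)]

/-- The QSP unitary `U_Φ(x) = Z(φ₀)·W(x)·Z(φ₁)·W(x)·Z(φ₂)⋯W(x)·Z(φ_d)`. -/
noncomputable def qspU {d : ℕ} (Φ : Fin (d + 1) → ℝ) (x : ℝ) :
    Matrix (Fin 2) (Fin 2) ℂ :=
  Zrot (Φ 0) * (List.ofFn fun k : Fin d => Wosc x * Zrot (Φ k.succ)).prod

/-- The nested QSP unitary `(Φ1 ∘ Φ0)(x)`: the QSP circuit of `Φ1` with each
oracle `W(x)` replaced by `U_{Φ0}(x)`. -/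
noncomputable def nestedU {n m : ℕ} (Φ1 : Fin (m + 1) → ℝ) (Φ0 : Fin (n + 1) → ℝ)
    (x : ℝ) : Matrix (Fin 2) (Fin 2) ℂ :=
  Zrot (Φ1 0) * (List.ofFn fun k : Fin m => qspU Φ0 x * Zrot (Φ1 k.succ)).prod

/-- A phase list `Φ = (φ_0, …, φ_d)` is antisymmetric if `φ_k = -φ_{d-k}` for all `k`. -/
def Antisym {d : ℕ} (Φ : Fin (d + 1) → ℝ) : Prop := ∀ k, Φ (Fin.rev k) = -Φ k

/-- A polynomial has parity `m mod 2` if only monomials of degree congruent to `m`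
modulo 2 have nonzero coefficients. -/
def HasParity {R : Type*} [Semiring R] (m : ℕ) (P : Polynomial R) : Prop :=
  ∀ k, k % 2 ≠ m % 2 → P.coeff k = 0

noncomputable def Xm : Matrix (Fin 2) (Fin 2) ℂ := !![0, 1; 1, 0]

lemma Xm_mul_Xm : Xm * Xm = 1 := by
  simp [Xm, Matrix.mul_fin_two, Matrix.one_fin_two]

lemma XZX (φ : ℝ) : Xm * Zrot φ * Xm = Zrot (-φ) := by
  simp [Xm, Zrot, Matrix.mul_fin_two, Complex.ofReal_neg, mul_neg]

lemma XWX (x : ℝ) : Xm * Wosc x * Xm = Wosc x := by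
  simp [Xm, Wosc, Matrix.mul_fin_two]

lemma Zrot_transpose (φ : ℝ) : (Zrot φ)ᵀ = Zrot φ := by
  ext i j; fin_cases i <;> fin_cases j <;> simp [Zrot]

lemma Wosc_transpose (x : ℝ) : (Wosc x)ᵀ = Wosc x := by
  ext i j; fin_cases i <;> fin_cases j <;> simp [Wosc]

lemma qspU_zero (Φ : Fin 1 → ℝ) (x : ℝ) : qspU Φ x = Zrot (Φ 0) := by
  simp [qspU]

lemma qspU_cons {d : ℕ} (Φ : Fin (d + 2) → ℝ) (x : ℝ) :
    qspU Φ x = Zrot (Φ 0) * (Wosc x * qspU (Φ ∘ Fin.succ) x) := by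
  unfold qspU
  rw [List.ofFn_succ, List.prod_cons]
  simp only [Function.comp_apply]
  rw [Fin.succ_zero_eq_one, mul_assoc (Wosc x)]

lemma qspU_snoc {d : ℕ} (Φ : Fin (d + 2) → ℝ) (x : ℝ) :
    qspU Φ x = qspU (Φ ∘ Fin.castSucc) x * (Wosc x * Zrot (Φ (Fin.last (d + 1)))) := by
  unfold qspU
  rw [List.ofFn_succ', List.concat_eq_append, List.prod_append, List.prod_cons, List.prod_nil]
  simp only [Function.comp_apply, Fin.succ_castSucc, Fin.succ_last, Fin.castSucc_zero, mul_one]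
  rw [mul_assoc]

lemma qspU_rev (d : ℕ) (Φ : Fin (d + 1) → ℝ) (x : ℝ) :
    qspU (Φ ∘ Fin.rev) x = (qspU Φ x)ᵀ := by
  induction d with
  | zero =>
      rw [qspU_zero, qspU_zero, Zrot_transpose]
      simp [Fin.rev_zero]
  | succ d ih =>
      rw [qspU_cons, qspU_snoc Φ, Matrix.transpose_mul, Matrix.transpose_mul,
        Zrot_transpose, Wosc_transpose, ← ih]
      have h1 : (Φ ∘ Fin.rev) ∘ Fin.succ = (Φ ∘ Fin.castSucc) ∘ Fin.rev := by
        funext k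
        simp [Function.comp_apply, Fin.rev_succ]
      have h2 : (Φ ∘ Fin.rev) 0 = Φ (Fin.last (d + 1)) := by
        simp [Function.comp_apply, Fin.rev_zero]
      rw [h1, h2, mul_assoc]

lemma conjX_mul (A B : Matrix (Fin 2) (Fin 2) ℂ) :
    (Xm * A * Xm) * (Xm * B * Xm) = Xm * (A * B) * Xm := by
  simp only [mul_assoc]
  rw [← mul_assoc Xm Xm, Xm_mul_Xm, one_mul]

lemma qspU_neg (d : ℕ) (Φ : Fin (d + 1) → ℝ) (x : ℝ) :
    qspU (fun k => -Φ k) x = Xm * qspU Φ x * Xm := by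
  induction d with
  | zero =>
      rw [qspU_zero, qspU_zero, XZX]
  | succ d ih =>
      rw [qspU_snoc, qspU_snoc Φ]
      have h1 : ((fun k => -Φ k) ∘ Fin.castSucc) = fun k => -(Φ ∘ Fin.castSucc) k := rfl
      have h2 : Wosc x * Zrot (-Φ (Fin.last (d + 1))) =
          Xm * (Wosc x * Zrot (Φ (Fin.last (d + 1)))) * Xm := by
        rw [← conjX_mul, XWX, XZX]
      rw [h1, ih, h2, conjX_mul]

lemma qsp_general (d : ℕ) (Φ : Fin (d + 1) → ℝ) :
    ∃ P Q : Polynomial ℂ,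
      P.degree ≤ (d : WithBot ℕ) ∧ HasParity d P ∧
      Q.degree < (d : WithBot ℕ) ∧ HasParity (d + 1) Q ∧
      ∀ x : ℝ, x ∈ Set.Icc (-1 : ℝ) 1 →
        (P.eval (x:ℂ) * (starRingEnd ℂ) (P.eval (x:ℂ))
           + (1 - (x:ℂ) ^ 2) * (Q.eval (x:ℂ) * (starRingEnd ℂ) (Q.eval (x:ℂ))) = 1) ∧
        qspU Φ x =
          !![P.eval (x:ℂ),
             Complex.I * (Real.sqrt (1 - x ^ 2) : ℂ) * Q.eval (x:ℂ);
             Complex.I * (Real.sqrt (1 - x ^ 2) : ℂ) * (starRingEnd ℂ) (Q.eval (x:ℂ)),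
             (starRingEnd ℂ) (P.eval (x:ℂ))] := by
  induction d with
  | zero =>
      refine ⟨C (Complex.exp (Complex.I * ((Φ 0 : ℝ) : ℂ))), 0, degree_C_le, ?_, ?_, ?_, ?_⟩
      · intro k hk
        rw [coeff_C, if_neg]
        rintro rfl; exact hk rfl
      · rw [Polynomial.degree_zero]
        exact_mod_cast WithBot.bot_lt_coe 0
      · intro k _; simp
      · intro x hx
        have hce : (starRingEnd ℂ) (Complex.exp (Complex.I * ((Φ 0 : ℝ) : ℂ)))
            = Complex.exp (-(Complex.I * ((Φ 0 : ℝ) : ℂ))) := by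
          rw [← Complex.exp_conj]; congr 1
          simp [Complex.conj_ofReal]
        constructor
        · simp only [eval_C, eval_zero, map_zero, mul_zero, add_zero, hce,
            ← Complex.exp_add]
          simp
        · rw [qspU_zero, Zrot]
          simp [hce]
  | succ d ih =>
      obtain ⟨P, Q, hdP, hpP, hdQ, hpQ, hPQ⟩ := ih (Φ ∘ Fin.castSucc)
      have hcP : ∀ m : ℕ, d < m → P.coeff m = 0 := by
        intro m hm
        exact (degree_le_iff_coeff_zero _ _).mp hdP m (by exact_mod_cast hm)
      have hcQ : ∀ m : ℕ, d ≤ m → Q.coeff m = 0 :=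
        (degree_lt_iff_coeff_zero _ _).mp hdQ
      set φ := Φ (Fin.last (d + 1)) with hφ
      set e := Complex.exp (Complex.I * (φ : ℂ)) with he
      have hce : (starRingEnd ℂ) e = Complex.exp (-(Complex.I * (φ : ℂ))) := by
        rw [he, ← Complex.exp_conj]; congr 1
        simp [Complex.conj_ofReal]
      have hee : e * (starRingEnd ℂ) e = 1 := by
        rw [hce, ← Complex.exp_add]; simp
      refine ⟨C e * (P * X ^ 1 + Q * X ^ 2 - Q), C ((starRingEnd ℂ) e) * (P + Q * X ^ 1),
        ?_, ?_, ?_, ?_, ?_⟩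
      · rw [degree_le_iff_coeff_zero]
        intro m hm
        have hm' : d + 1 < m := by exact_mod_cast hm
        rw [coeff_C_mul, coeff_sub, coeff_add, coeff_mul_X_pow', coeff_mul_X_pow',
          if_pos (by omega), if_pos (by omega), hcP _ (by omega), hcQ _ (by omega),
          hcQ _ (by omega)]
        ring
      · intro k hk
        rw [coeff_C_mul, coeff_sub, coeff_add, coeff_mul_X_pow', coeff_mul_X_pow',
          hpQ _ hk]
        split_ifs with h1 h2 h2
        · rw [hpP _ (by omega), hpQ _ (by omega)]; ring
        · rw [hpP _ (by omega)]; ring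
        · rw [hpQ _ (by omega)]; ring
        · ring
      · rw [degree_lt_iff_coeff_zero]
        intro m hm
        rw [coeff_C_mul, coeff_add, coeff_mul_X_pow', hcP _ (by omega)]
        split_ifs with h1
        · rw [hcQ _ (by omega)]; ring
        · ring
      · intro k hk
        rw [coeff_C_mul, coeff_add, coeff_mul_X_pow', hpP _ (by omega)]
        split_ifs with h1
        · rw [hpQ _ (by omega)]; ring
        · ring
      · intro x hx
        obtain ⟨hid, hU⟩ := hPQ x hx
        have h0 : (0:ℝ) ≤ 1 - x ^ 2 := by nlinarith [hx.1, hx.2]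
        have hs2 : ((Real.sqrt (1 - x ^ 2) : ℝ) : ℂ) ^ 2 = 1 - (x:ℂ) ^ 2 := by
          rw [← Complex.ofReal_pow, Real.sq_sqrt h0]
          push_cast; ring
        constructor
        · simp only [eval_mul, eval_add, eval_sub, eval_pow, eval_C, eval_X,
            _root_.map_mul, _root_.map_add, _root_.map_sub, map_pow, Complex.conj_conj,
            Complex.conj_ofReal]
          linear_combination (e * (starRingEnd ℂ) e) * hid + hee
        · rw [qspU_snoc, hU, ← hφ]
          have hxe : Complex.exp (-(Complex.I * (φ : ℂ))) = (starRingEnd ℂ) e := hce.symm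
          ext i j
          fin_cases i <;> fin_cases j <;>
            simp only [Wosc, Zrot, Matrix.mul_apply, Fin.sum_univ_two, Fin.mk_zero, Fin.mk_one,
              Fin.isValue, Matrix.cons_val', Matrix.cons_val_zero, Matrix.cons_val_one,
              Matrix.head_cons, Matrix.head_fin_const, Matrix.empty_val',
              Matrix.cons_val_fin_one, Matrix.of_apply,
              hxe, eval_mul, eval_add, eval_sub, eval_pow, eval_C, eval_X,
              _root_.map_mul, _root_.map_add, _root_.map_sub, map_pow, Complex.conj_conj,
              Complex.conj_ofReal]
          · linear_combination (e * Q.eval (x:ℂ) * ((Real.sqrt (1 - x ^ 2) : ℝ) : ℂ) ^ 2) *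
              Complex.I_sq - e * Q.eval (x:ℂ) * hs2
          · ring
          · ring
          · linear_combination ((starRingEnd ℂ) e * (starRingEnd ℂ) (Q.eval (x:ℂ)) *
              ((Real.sqrt (1 - x ^ 2) : ℝ) : ℂ) ^ 2) * Complex.I_sq
              - (starRingEnd ℂ) e * (starRingEnd ℂ) (Q.eval (x:ℂ)) * hs2

lemma conj_eval_real (p : Polynomial ℂ) (x : ℝ) :
    (starRingEnd ℂ) (p.eval (x:ℂ)) = (p.map (starRingEnd ℂ)).eval (x:ℂ) := by
  induction p using Polynomial.induction_on' with
  | add p q hp hq => simp [hp, hq]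
  | monomial n a => simp [Complex.conj_ofReal]

/-- Every antisymmetric QSP protocol embeds a real polynomial `P`
(and a complex `Q`) of the stated degrees and parities; in particular its
diagonal entries are equal and real.  (Here parity `(d-1) mod 2` is expressed
as parity `(d+1) mod 2`, which is the same congruence class.) -/
theorem antisym_qsp_embeds_real_poly (d : ℕ) (Φ : Fin (d + 1) → ℝ)
    (hΦ : Antisym Φ) :
    ∃ (P : Polynomial ℝ) (Q : Polynomial ℂ),
      P.degree ≤ (d : WithBot ℕ) ∧ HasParity d P ∧
      Q.degree < (d : WithBot ℕ) ∧ HasParity (d + 1) Q ∧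
      (∀ x ∈ Set.Icc (-1 : ℝ) 1,
        (P.eval x) ^ 2 + (1 - x ^ 2) * Complex.normSq (Q.eval (x : ℂ)) = 1) ∧
      (∀ x ∈ Set.Icc (-1 : ℝ) 1,
        qspU Φ x =
          !![((P.eval x : ℝ) : ℂ), (Real.sqrt (1 - x ^ 2) : ℂ) * Q.eval (x : ℂ);
             -((Real.sqrt (1 - x ^ 2) : ℂ) * (starRingEnd ℂ) (Q.eval (x : ℂ))),
             ((P.eval x : ℝ) : ℂ)]) ∧
      (∀ x ∈ Set.Icc (-1 : ℝ) 1,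
        (qspU Φ x) 0 0 = (qspU Φ x) 1 1 ∧ ((qspU Φ x) 0 0).im = 0) := by
  obtain ⟨P, Q, hdP, hpP, hdQ, hpQ, hPQ⟩ := qsp_general d Φ
  have hrevΦ : Φ ∘ Fin.rev = fun k => -Φ k := funext fun k => hΦ k
  have hXUX : ∀ x : ℝ, (qspU Φ x)ᵀ = Xm * qspU Φ x * Xm := by
    intro x; rw [← qspU_rev, hrevΦ, qspU_neg]
  have hreal : ∀ x ∈ Set.Icc (-1:ℝ) 1,
      P.eval (x:ℂ) = (starRingEnd ℂ) (P.eval (x:ℂ)) := by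
    intro x hx
    obtain ⟨-, hU⟩ := hPQ x hx
    have h00 := congrArg (fun M => M 0 0) (hXUX x)
    simp only [Matrix.transpose_apply] at h00
    rw [hU] at h00
    simpa [Xm, Matrix.mul_apply, Fin.sum_univ_two] using h00
  have hR : P - P.map (starRingEnd ℂ) = 0 := by
    apply Polynomial.eq_zero_of_infinite_isRoot
    have hsub : ((fun t : ℝ => (t:ℂ)) '' Set.Icc (-1) 1)
        ⊆ {z | (P - P.map (starRingEnd ℂ)).IsRoot z} := by
      rintro z ⟨t, ht, rfl⟩
      simp only [Set.mem_setOf_eq, Polynomial.IsRoot, Polynomial.eval_sub]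
      rw [← conj_eval_real, ← hreal t ht, sub_self]
    exact ((Set.Icc_infinite (by norm_num)).image Complex.ofReal_injective.injOn).mono hsub
  have hcoeff : ∀ k, (P.coeff k).im = 0 := by
    intro k
    have h := congrArg (fun p => Polynomial.coeff p k) hR
    simp only [Polynomial.coeff_sub, Polynomial.coeff_map, Polynomial.coeff_zero,
      sub_eq_zero] at h
    exact Complex.conj_eq_iff_im.mp h.symm
  set Pr : Polynomial ℝ := ∑ n ∈ P.support, Polynomial.C (P.coeff n).re * Polynomial.X ^ n
    with hPr
  have hmap : Pr.map (algebraMap ℝ ℂ) = P := by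
    conv_rhs => rw [P.as_sum_support]
    rw [hPr, Polynomial.map_sum]
    refine Finset.sum_congr rfl fun n _ => ?_
    rw [Polynomial.map_mul, Polynomial.map_C, Polynomial.map_pow, Polynomial.map_X,
      Polynomial.C_mul_X_pow_eq_monomial]
    congr 1
    apply Complex.ext <;> simp [hcoeff n]
  have hPrc : ∀ k, ((Pr.coeff k : ℝ) : ℂ) = P.coeff k := by
    intro k
    rw [← hmap, Polynomial.coeff_map]
    rfl
  have heval : ∀ x : ℝ, P.eval (x:ℂ) = ((Pr.eval x : ℝ) : ℂ) := by
    intro x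
    rw [← hmap, Polynomial.eval_map]
    exact Polynomial.eval₂_at_apply (algebraMap ℝ ℂ) x
  refine ⟨Pr, Polynomial.C Complex.I * Q, ?_, ?_, ?_, ?_, ?_, ?_, ?_⟩
  · rw [Polynomial.degree_le_iff_coeff_zero]
    intro m hm
    have h0 : P.coeff m = 0 := (Polynomial.degree_le_iff_coeff_zero _ _).mp hdP m hm
    have := hPrc m
    rw [h0] at this
    exact_mod_cast this
  · intro k hk
    have h0 : P.coeff k = 0 := hpP k hk
    have := hPrc k
    rw [h0] at this
    exact_mod_cast this
  · rw [Polynomial.degree_lt_iff_coeff_zero]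
    intro m hm
    rw [Polynomial.coeff_C_mul, (Polynomial.degree_lt_iff_coeff_zero _ _).mp hdQ m hm,
      mul_zero]
  · intro k hk
    rw [Polynomial.coeff_C_mul, hpQ k hk, mul_zero]
  · intro x hx
    obtain ⟨hid, -⟩ := hPQ x hx
    rw [heval x, Complex.conj_ofReal, Complex.mul_conj] at hid
    have hnq : Complex.normSq ((Polynomial.C Complex.I * Q).eval (x:ℂ))
        = Complex.normSq (Q.eval (x:ℂ)) := by
      simp [Complex.normSq_mul]
    rw [hnq, sq]
    exact_mod_cast hid
  · intro x hx
    obtain ⟨-, hU⟩ := hPQ x hx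
    rw [hU]
    ext i j
    fin_cases i <;> fin_cases j <;>
      simp only [Fin.mk_zero, Fin.mk_one, Fin.isValue, Matrix.cons_val', Matrix.cons_val_zero,
        Matrix.cons_val_one, Matrix.head_cons, Matrix.head_fin_const, Matrix.empty_val',
        Matrix.cons_val_fin_one, Matrix.of_apply, Polynomial.eval_mul, Polynomial.eval_C,
        _root_.map_mul, Complex.conj_I, heval x, Complex.conj_ofReal]
    all_goals ring
  · intro x hx
    obtain ⟨-, hU⟩ := hPQ x hx
    rw [hU]
    constructor
    · simp [heval x, Complex.conj_ofReal]
    · simp [heval x]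
end

section
/- A 2×2 complex unitary matrix U with det U = 1 has both diagonal entries equal and real (i.e., U₁₁ = U₂₂ ∈ ℝ) if and only if there exist a, b ∈ ℝ such that U = exp(i·(a·σ_x + b·σ_y)), where exp is the matrix exponential; that is, U is a rotation about an axis in the XY-plane of the Bloch sphere. -/
/-!
With `z = b + a i`, the generator `i (a σ_x + b σ_y)` is `Z = !![0, z; -z̄, 0]` and
`Z ^ 2 = -‖z‖² • 1`, so splitting the exponential series into even and odd terms gives
`exp Z = cos ‖z‖ • 1 + sinc ‖z‖ • Z`, whose diagonal entries are both `cos ‖z‖ ∈ ℝ`.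

Conversely, unitarity and `det U = 1` force `U = !![α, β; -β̄, ᾱ]` with `‖α‖² + ‖β‖² = 1`.
If `α` is real, `θ = arccos α ∈ [0, π]` and `z = θ e^{i arg β}` give `cos ‖z‖ = α` and
`sinc ‖z‖ • z = sin θ e^{i arg β} = ‖β‖ e^{i arg β} = β`, so `U = exp Z`.
-/

open Matrix

/-- The Pauli matrix σ_x. -/
def pauliX : Matrix (Fin 2) (Fin 2) ℂ := !![0, 1; 1, 0]

/-- The Pauli matrix σ_y. -/
def pauliY : Matrix (Fin 2) (Fin 2) ℂ := !![0, -Complex.I; Complex.I, 0]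

open NormedSpace Nat ComplexConjugate Complex

theorem Real.sinc_mul_self (x : ℝ) : Real.sinc x * x = Real.sin x := by
  rcases eq_or_ne x 0 with rfl | hx
  · simp
  · rw [Real.sinc_of_ne_zero hx, div_mul_cancel₀ _ hx]

theorem Real.hasSum_sinc (r : ℝ) :
    HasSum (fun n : ℕ => (-1) ^ n * r ^ (2 * n) / ↑(2 * n + 1)!) (Real.sinc r) := by
  rcases eq_or_ne r 0 with rfl | hr
  · rw [Real.sinc_zero]
    refine (hasSum_ite_eq 0 (1 : ℝ)).congr_fun fun n => ?_
    rcases eq_or_ne n 0 with rfl | hn <;> simp [*]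
  · rw [Real.sinc_of_ne_zero hr]
    refine ((Real.hasSum_sin r).div_const r).congr_fun fun n => ?_
    rw [pow_succ]
    field_simp

theorem NormedSpace.exp_eq_cos_smul_one_add_sinc_smul {A : Type*} [Ring A] [Algebra ℝ A]
    [TopologicalSpace A] [IsTopologicalRing A] [ContinuousSMul ℝ A] [T2Space A]
    {x : A} {r : ℝ} (hx : x ^ 2 = -(r ^ 2) • (1 : A)) :
    exp x = Real.cos r • (1 : A) + Real.sinc r • x := by
  have hpow (n : ℕ) : x ^ (2 * n) = ((-1) ^ n * r ^ (2 * n)) • (1 : A) := by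
    rw [pow_mul, hx, smul_pow, one_pow, neg_pow, pow_mul]
  rw [exp_eq_tsum ℝ]
  refine HasSum.tsum_eq (HasSum.even_add_odd ?_ ?_)
  · refine ((Real.hasSum_cos r).smul_const (1 : A)).congr_fun fun n => ?_
    rw [hpow, smul_smul]
    ring_nf
  · refine ((Real.hasSum_sinc r).smul_const x).congr_fun fun n => ?_
    rw [pow_succ, hpow, smul_mul_assoc, one_mul, smul_smul]
    ring_nf

theorem Complex.exists_cos_norm_eq_and_sinc_norm_smul_eq {α : ℝ} {β : ℂ}
    (h : α ^ 2 + ‖β‖ ^ 2 = 1) : ∃ z : ℂ, Real.cos ‖z‖ = α ∧ Real.sinc ‖z‖ • z = β := by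
  obtain ⟨hα₁, hα₂⟩ := abs_le.mp <| (sq_le_one_iff_abs_le_one α).mp <| by
    nlinarith [norm_nonneg β]
  set θ := Real.arccos α
  have hθ : 0 ≤ θ := Real.arccos_nonneg α
  have hsin : Real.sin θ = ‖β‖ := by
    rw [Real.sin_arccos, ← h, add_sub_cancel_left, Real.sqrt_sq (norm_nonneg β)]
  have hnorm : ‖(θ : ℂ) * exp (arg β * I)‖ = θ := by
    rw [norm_mul, norm_exp_ofReal_mul_I, mul_one, norm_real, Real.norm_of_nonneg hθ]
  refine ⟨θ * exp (arg β * I), ?_, ?_⟩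
  · rw [hnorm]
    exact Real.cos_arccos hα₁ hα₂
  · rw [hnorm, real_smul, ← mul_assoc, ← ofReal_mul, Real.sinc_mul_self, hsin,
      norm_mul_exp_arg_mul_I]

theorem Matrix.sum_norm_sq_row_eq_one_of_mem_unitaryGroup {𝕜 n : Type*} [RCLike 𝕜] [Fintype n]
    [DecidableEq n] {U : Matrix n n 𝕜} (hU : U ∈ unitaryGroup n 𝕜) (i : n) :
    ∑ j, ‖U i j‖ ^ 2 = 1 := by
  have h := congr_fun₂ (mem_unitaryGroup_iff.mp hU) i i
  simp only [mul_apply, star_apply, ← starRingEnd_apply, RCLike.mul_conj, one_apply_eq] at h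
  exact_mod_cast h

theorem Matrix.star_eq_adjugate_of_mem_unitaryGroup_of_det_eq_one {n R : Type*} [Fintype n]
    [DecidableEq n] [CommRing R] [StarRing R] {U : Matrix n n R} (hU : U ∈ unitaryGroup n R)
    (hdet : U.det = 1) : star U = adjugate U := calc
  star U = (adjugate U * U) * star U := by rw [adjugate_mul, hdet, one_smul, one_mul]
  _ = adjugate U := by rw [mul_assoc, mem_unitaryGroup_iff.mp hU, mul_one]

theorem Matrix.eq_fin_two_of_mem_unitaryGroup_of_det_eq_one {R : Type*} [CommRing R] [StarRing R]
    {U : Matrix (Fin 2) (Fin 2) R} (hU : U ∈ unitaryGroup (Fin 2) R) (hdet : U.det = 1) :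
    U = !![U 0 0, U 0 1; -star (U 0 1), star (U 0 0)] := by
  have h := star_eq_adjugate_of_mem_unitaryGroup_of_det_eq_one hU hdet
  rw [adjugate_fin_two, star_eq_conjTranspose] at h
  have h00 : star (U 0 0) = U 1 1 := by simpa using congr_fun₂ h 0 0
  have h01 : star (U 1 0) = -U 0 1 := by simpa using congr_fun₂ h 0 1
  have h10 : U 1 0 = -star (U 0 1) := by rw [← star_star (U 1 0), h01, star_neg]
  conv_lhs => rw [eta_fin_two U]
  rw [h10, h00]

theorem I_smul_pauliX_add_pauliY (a b : ℝ) :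
    I • ((a : ℂ) • pauliX + (b : ℂ) • pauliY) = !![0, b + a * I; -conj (b + a * I), 0] := by
  ext i j
  fin_cases i <;> fin_cases j <;> simp [pauliX, pauliY, mul_add, mul_left_comm I] <;> ring

theorem exp_fin_two_offDiag_neg_conj (z : ℂ) :
    exp !![0, z; -conj z, 0] =
      Real.cos ‖z‖ • (1 : Matrix (Fin 2) (Fin 2) ℂ) + Real.sinc ‖z‖ • !![0, z; -conj z, 0] := by
  refine exp_eq_cos_smul_one_add_sinc_smul ?_
  ext i j
  fin_cases i <;> fin_cases j <;> simp [sq, mul_conj', mul_comm]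

/-- A 2×2 unitary with determinant 1 has both diagonal entries
equal and real iff it is `exp(i(a·σ_x + b·σ_y))` for some real `a, b`, i.e. a
rotation about an axis in the XY-plane of the Bloch sphere. -/
theorem unitary_equal_real_diag_iff_xy_rotation (U : Matrix (Fin 2) (Fin 2) ℂ)
    (hU : U ∈ Matrix.unitaryGroup (Fin 2) ℂ) (hdet : U.det = 1) :
    (U 0 0 = U 1 1 ∧ (U 0 0).im = 0) ↔
      ∃ a b : ℝ,
        U = NormedSpace.exp (Complex.I • ((a : ℂ) • pauliX + (b : ℂ) • pauliY)) := by
  constructor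
  · rintro ⟨-, him⟩
    have hα : U 0 0 = ((U 0 0).re : ℂ) := ext rfl (by simpa using him)
    have hrow : (U 0 0).re ^ 2 + ‖U 0 1‖ ^ 2 = 1 := by
      have h := sum_norm_sq_row_eq_one_of_mem_unitaryGroup hU 0
      rwa [Fin.sum_univ_two, hα, norm_real, Real.norm_eq_abs, sq_abs] at h
    obtain ⟨z, hcos, hsinc⟩ := exists_cos_norm_eq_and_sinc_norm_smul_eq hrow
    refine ⟨z.im, z.re, ?_⟩
    rw [I_smul_pauliX_add_pauliY, re_add_im, exp_fin_two_offDiag_neg_conj,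
      eq_fin_two_of_mem_unitaryGroup_of_det_eq_one hU hdet, ← hsinc, hα, hcos]
    ext i j
    fin_cases i <;> fin_cases j <;> simp
  · rintro ⟨a, b, rfl⟩
    rw [I_smul_pauliX_add_pauliY, exp_fin_two_offDiag_neg_conj]
    simp
end

section
/- Let Φ0 ∈ ℝ^{n+1} and Φ1 ∈ ℝ^{m+1} be antisymmetric phase lists, and let P0 and P1 be the real polynomials such that both diagonal entries of U_{Φ0}(x) equal P0(x) and both diagonal entries of U_{Φ1}(x) equal P1(x) for all x ∈ [-1,1]. Then for every x ∈ [-1,1], both diagonal entries of the nested QSP unitary (Φ1 ∘ Φ0)(x) are equal to the composition P1(P0(x)); in particular, nesting of antisymmetric QSP protocols composes their embedded polynomial transforms. -/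
open Matrix Polynomial

/-!
A matrix of `SU(2)` has the form `!![a, b; -b̄, ā]`. If its diagonal is a real number `p`, then
`p² + |b|² = 1`, so `p ∈ [-1, 1]`, and writing `b = i |b| e^{iθ}` exhibits the matrix as
`Z(θ/2) W(p) Z(-θ/2)`. Apply this to the inner unitary `U_{Φ0}(x)` with `p = P0(x)`: in the
nested circuit the conjugations by `Z(θ/2)` commute past the `Z`-rotations of `Φ1`, so
`(Φ1 ∘ Φ0)(x) = Z(θ/2) U_{Φ1}(p) Z(-θ/2)`, and conjugation by a `Z`-rotation leaves the
diagonal, `P1(p)`, unchanged.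
-/

theorem SemiconjBy.list_prod_ofFn {M : Type*} [Monoid M] {a : M} {m : ℕ} {f g : Fin m → M}
    (h : ∀ k, SemiconjBy a (f k) (g k)) :
    SemiconjBy a (List.ofFn f).prod (List.ofFn g).prod := by
  induction m with
  | zero => exact SemiconjBy.one_right a
  | succ m ih =>
    simp only [List.ofFn_succ, List.prod_cons]
    exact (h 0).mul_right (ih fun k => h k.succ)

lemma apply_one_zero_eq_neg_star_of_mem_specialUnitaryGroup {R : Type*} [CommRing R]
    [StarRing R] {U : Matrix (Fin 2) (Fin 2) R} (hU : U ∈ specialUnitaryGroup (Fin 2) R) :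
    U 1 0 = -star (U 0 1) := by
  obtain ⟨hunit, hdet⟩ := mem_specialUnitaryGroup_iff.1 hU
  have hstar : star U = adjugate U := by
    calc star U = star U * (U * adjugate U) := by rw [mul_adjugate, hdet, one_smul, mul_one]
      _ = adjugate U := by rw [← mul_assoc, mem_unitaryGroup_iff'.1 hunit, one_mul]
  have h := congrFun₂ hstar 0 1
  simp only [star_apply, adjugate_fin_two, of_apply, cons_val', cons_val_one, cons_val_zero] at h
  rw [← star_star (U 1 0), h, star_neg]

lemma Zrot_mul_Zrot (a b : ℝ) : Zrot a * Zrot b = Zrot (a + b) := by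
  ext i j
  fin_cases i <;> fin_cases j <;>
    simp [Zrot, mul_apply, Fin.sum_univ_two, ← Complex.exp_add] <;> ring_nf

lemma Zrot_zero : Zrot 0 = 1 := by
  simp [Zrot, one_fin_two]

lemma Zrot_commute (a b : ℝ) : Commute (Zrot a) (Zrot b) := by
  rw [Commute, SemiconjBy, Zrot_mul_Zrot, Zrot_mul_Zrot, add_comm]

lemma Zrot_mem_specialUnitaryGroup (φ : ℝ) : Zrot φ ∈ specialUnitaryGroup (Fin 2) ℂ := by
  refine ⟨?_, ?_⟩
  · rw [SetLike.mem_coe, mem_unitaryGroup_iff]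
    ext i j
    fin_cases i <;> fin_cases j <;>
      simp [Zrot, mul_apply, Fin.sum_univ_two, star_apply, ← Complex.exp_conj,
        ← Complex.exp_add, one_apply]
  · simp [Zrot, det_fin_two_of, ← Complex.exp_add]

lemma Wosc_mem_specialUnitaryGroup {x : ℝ} (hx : x ∈ Set.Icc (-1 : ℝ) 1) :
    Wosc x ∈ specialUnitaryGroup (Fin 2) ℂ := by
  have hs : Real.sqrt (1 - x ^ 2) ^ 2 = 1 - x ^ 2 := Real.sq_sqrt (by nlinarith [hx.1, hx.2])
  refine ⟨?_, ?_⟩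
  · rw [SetLike.mem_coe, mem_unitaryGroup_iff]
    ext i j
    fin_cases i <;> fin_cases j <;>
      · simp [Wosc, mul_apply, Fin.sum_univ_two, star_apply, one_apply, Complex.ext_iff]
        nlinarith [hs]
  · simp [Wosc, det_fin_two_of, Complex.ext_iff]
    nlinarith [hs]

lemma qspU_mem_specialUnitaryGroup {d : ℕ} (Φ : Fin (d + 1) → ℝ) {x : ℝ}
    (hx : x ∈ Set.Icc (-1 : ℝ) 1) : qspU Φ x ∈ specialUnitaryGroup (Fin 2) ℂ := by
  refine mul_mem (Zrot_mem_specialUnitaryGroup _) (list_prod_mem fun M hM => ?_)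
  obtain ⟨k, rfl⟩ := List.mem_ofFn.1 hM
  exact mul_mem (Wosc_mem_specialUnitaryGroup hx) (Zrot_mem_specialUnitaryGroup _)

lemma Zrot_mul_mul_Zrot_neg (α : ℝ) (M : Matrix (Fin 2) (Fin 2) ℂ) :
    Zrot α * M * Zrot (-α) =
      !![M 0 0, M 0 1 * Complex.exp (Complex.I * α) ^ 2;
         M 1 0 * (Complex.exp (Complex.I * α) ^ 2)⁻¹, M 1 1] := by
  have hz := Complex.exp_ne_zero (Complex.I * α)
  ext i j
  fin_cases i <;> fin_cases j <;>
    simp [Zrot, mul_apply, Fin.sum_univ_two, vecMul, dotProduct, Complex.exp_neg] <;>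
    field_simp

lemma exists_eq_Zrot_mul_Wosc_mul_Zrot_neg {U : Matrix (Fin 2) (Fin 2) ℂ}
    (hU : U ∈ specialUnitaryGroup (Fin 2) ℂ) {p : ℝ} (h00 : U 0 0 = p) (h11 : U 1 1 = p) :
    p ∈ Set.Icc (-1 : ℝ) 1 ∧ ∃ α, U = Zrot α * Wosc p * Zrot (-α) := by
  set b := U 0 1
  have hc : U 1 0 = -(starRingEnd ℂ) b := apply_one_zero_eq_neg_star_of_mem_specialUnitaryGroup hU
  have hnorm : p ^ 2 + ‖b‖ ^ 2 = 1 := by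
    have hdet := (mem_specialUnitaryGroup_iff.1 hU).2
    rw [det_fin_two, h00, h11, hc, mul_neg, sub_neg_eq_add, Complex.mul_conj,
      ← Complex.sq_norm] at hdet
    rw [sq]
    exact_mod_cast hdet
  have hb : ‖b‖ = Real.sqrt (1 - p ^ 2) := by
    rw [show 1 - p ^ 2 = ‖b‖ ^ 2 by linarith, Real.sqrt_sq (norm_nonneg b)]
  refine ⟨⟨by nlinarith [norm_nonneg b], by nlinarith [norm_nonneg b]⟩, ?_⟩
  set θ := Complex.arg (-(Complex.I * b))
  have hpolar : (‖b‖ : ℂ) * Complex.exp (θ * Complex.I) = -(Complex.I * b) := by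
    simpa using Complex.norm_mul_exp_arg_mul_I (-(Complex.I * b))
  have hconj : (‖b‖ : ℂ) * Complex.exp (-(θ * Complex.I)) = Complex.I * (starRingEnd ℂ) b := by
    simpa [← Complex.exp_conj] using congrArg (starRingEnd ℂ) hpolar
  have hsq : Complex.exp (Complex.I * (θ / 2 : ℝ)) ^ 2 = Complex.exp (θ * Complex.I) := by
    rw [← Complex.exp_nat_mul]; push_cast; ring_nf
  have h01 : Complex.I * ‖b‖ * Complex.exp (θ * Complex.I) = b := by
    linear_combination Complex.I * hpolar - b * Complex.I_sq
  have h10 : Complex.I * ‖b‖ * Complex.exp (-(θ * Complex.I)) = -(starRingEnd ℂ) b := by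
    linear_combination Complex.I * hconj + (starRingEnd ℂ) b * Complex.I_sq
  refine ⟨θ / 2, ?_⟩
  rw [Zrot_mul_mul_Zrot_neg, hsq, ← Complex.exp_neg, eta_fin_two U, h00, h11, hc]
  simp only [Wosc, of_apply, cons_val', cons_val_zero, cons_val_one, empty_val', cons_val_fin_one,
    ← hb, h01, h10]
  rfl

lemma nestedU_eq_Zrot_mul_qspU_mul_Zrot_neg {n m : ℕ} (Φ1 : Fin (m + 1) → ℝ)
    (Φ0 : Fin (n + 1) → ℝ) {x p α : ℝ} (h : qspU Φ0 x = Zrot α * Wosc p * Zrot (-α)) :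
    nestedU Φ1 Φ0 x = Zrot α * qspU Φ1 p * Zrot (-α) := by
  have hW : SemiconjBy (Zrot α) (Wosc p) (qspU Φ0 x) := by
    rw [SemiconjBy, h, mul_assoc _ (Zrot (-α)), Zrot_mul_Zrot, neg_add_cancel, Zrot_zero, mul_one]
  have hnest : SemiconjBy (Zrot α) (qspU Φ1 p) (nestedU Φ1 Φ0 x) :=
    SemiconjBy.mul_right (Zrot_commute α (Φ1 0))
      (SemiconjBy.list_prod_ofFn fun k => hW.mul_right (Zrot_commute α (Φ1 k.succ)))
  rw [hnest.eq, mul_assoc, Zrot_mul_Zrot, add_neg_cancel, Zrot_zero, mul_one]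

theorem antisym_qsp_nesting_composes_general (n m : ℕ)
    (Φ0 : Fin (n + 1) → ℝ) (Φ1 : Fin (m + 1) → ℝ)
    (P0 P1 : Polynomial ℝ)
    (hP0 : ∀ x ∈ Set.Icc (-1 : ℝ) 1,
      (qspU Φ0 x) 0 0 = ((P0.eval x : ℝ) : ℂ) ∧
      (qspU Φ0 x) 1 1 = ((P0.eval x : ℝ) : ℂ))
    (hP1 : ∀ x ∈ Set.Icc (-1 : ℝ) 1,
      (qspU Φ1 x) 0 0 = ((P1.eval x : ℝ) : ℂ) ∧
      (qspU Φ1 x) 1 1 = ((P1.eval x : ℝ) : ℂ)) :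
    ∀ x ∈ Set.Icc (-1 : ℝ) 1,
      (nestedU Φ1 Φ0 x) 0 0 = ((P1.eval (P0.eval x) : ℝ) : ℂ) ∧
      (nestedU Φ1 Φ0 x) 1 1 = ((P1.eval (P0.eval x) : ℝ) : ℂ) := by
  intro x hx
  obtain ⟨h00, h11⟩ := hP0 x hx
  obtain ⟨hp, α, hconj⟩ :=
    exists_eq_Zrot_mul_Wosc_mul_Zrot_neg (qspU_mem_specialUnitaryGroup Φ0 hx) h00 h11
  rw [nestedU_eq_Zrot_mul_qspU_mul_Zrot_neg Φ1 Φ0 hconj, Zrot_mul_mul_Zrot_neg]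
  exact hP1 _ hp

/-- Nesting of antisymmetric QSP protocols composes their
embedded (real) polynomial transforms. -/
theorem antisym_qsp_nesting_composes (n m : ℕ)
    (Φ0 : Fin (n + 1) → ℝ) (Φ1 : Fin (m + 1) → ℝ)
    (h0 : Antisym Φ0) (h1 : Antisym Φ1) (P0 P1 : Polynomial ℝ)
    (hP0 : ∀ x ∈ Set.Icc (-1 : ℝ) 1,
      (qspU Φ0 x) 0 0 = ((P0.eval x : ℝ) : ℂ) ∧
      (qspU Φ0 x) 1 1 = ((P0.eval x : ℝ) : ℂ))
    (hP1 : ∀ x ∈ Set.Icc (-1 : ℝ) 1,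
      (qspU Φ1 x) 0 0 = ((P1.eval x : ℝ) : ℂ) ∧
      (qspU Φ1 x) 1 1 = ((P1.eval x : ℝ) : ℂ)) :
    ∀ x ∈ Set.Icc (-1 : ℝ) 1,
      (nestedU Φ1 Φ0 x) 0 0 = ((P1.eval (P0.eval x) : ℝ) : ℂ) ∧
      (nestedU Φ1 Φ0 x) 1 1 = ((P1.eval (P0.eval x) : ℝ) : ℂ) :=
  antisym_qsp_nesting_composes_general n m Φ0 Φ1 P0 P1 hP0 hP1
end

section
/- Let Φ0 ∈ ℝ^{n+1} be a phase list and let P0 be the complex polynomial such that the top-left entry of U_{Φ0}(x) equals P0(x) for all x ∈ [-1,1]. If there exists x* ∈ [-1,1] with P0(x*) not real, then there exist an antisymmetric phase list Φ1 (with P1 the real polynomial equal to both diagonal entries of U_{Φ1}) and a point x ∈ [-1,1] such that the top-left entry of the nested QSP unitary (Φ1 ∘ Φ0)(x) is not equal to P1(P0(x)). In particular, antisymmetry (realness of the embedded polynomial) is necessary for nesting of QSP protocols to compose their embedded polynomial transforms at all arguments. -/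
open Matrix Polynomial

/-!
Take the outer protocol with three zero phases: it is `W(x)²`, whose diagonal is the Chebyshev
polynomial `T₂(x) = 2x² - 1`. Nesting it around `Φ0` gives `U²` with `U = U_{Φ0}(x) ∈ SU(2)`, and
in `SU(2)` the entries satisfy `U₁₁ = conj U₀₀` and `det U = 1`, so with `a = U₀₀`
`(U²)₀₀ = a² + U₀₁U₁₀ = a² + a·conj a - 1`. This equals `T₂(a) = 2a² - 1` only when
`a (conj a - a) = 0`, that is, only when `a` is real.
-/

section SpecialUnitaryFinTwo

variable {α : Type*} [CommRing α] [StarRing α]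

lemma of_mem_specialUnitaryGroup_fin_two {a b : α} (h : star a * a + star b * b = 1) :
    !![a, -star b; b, star a] ∈ specialUnitaryGroup (Fin 2) α := by
  refine mem_specialUnitaryGroup_iff.mpr ⟨mem_unitaryGroup_iff.mpr ?_, ?_⟩
  · ext i j
    fin_cases i <;> fin_cases j <;>
      simp [mul_apply, star_eq_conjTranspose, mul_comm, add_comm, ← h]
  · rw [det_fin_two_of]
    linear_combination h

variable {U : Matrix (Fin 2) (Fin 2) α}

lemma apply_one_one_eq_star_of_mem_specialUnitaryGroup
    (hU : U ∈ specialUnitaryGroup (Fin 2) α) : U 1 1 = star (U 0 0) := by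
  obtain ⟨hunit, hdet⟩ := hU
  have h : star U = U.adjugate := by
    rw [← inv_eq_right_inv (mem_unitaryGroup_iff.mp hunit), inv_def]
    simp [show U.det = 1 from hdet]
  simpa [star_eq_conjTranspose, adjugate_fin_two] using (congrFun (congrFun h 0) 0).symm

lemma sq_apply_zero_zero_of_mem_specialUnitaryGroup
    (hU : U ∈ specialUnitaryGroup (Fin 2) α) :
    (U ^ 2) 0 0 = U 0 0 ^ 2 + U 0 0 * star (U 0 0) - 1 := by
  have hdet : U.det = 1 := hU.2
  rw [det_fin_two, apply_one_one_eq_star_of_mem_specialUnitaryGroup hU] at hdet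
  rw [sq, mul_apply, Fin.sum_univ_two]
  linear_combination -hdet

end SpecialUnitaryFinTwo

lemma im_apply_zero_zero_eq_zero_of_sq_apply_zero_zero {U : Matrix (Fin 2) (Fin 2) ℂ}
    (hU : U ∈ specialUnitaryGroup (Fin 2) ℂ) (h : (U ^ 2) 0 0 = 2 * U 0 0 ^ 2 - 1) :
    (U 0 0).im = 0 := by
  rw [sq_apply_zero_zero_of_mem_specialUnitaryGroup hU] at h
  have hconj : U 0 0 * (star (U 0 0) - U 0 0) = 0 := by linear_combination h
  rcases mul_eq_zero.mp hconj with h0 | h0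
  · simp [h0]
  · exact Complex.conj_eq_iff_im.mp (sub_eq_zero.mp h0)

lemma sq_ofReal_sqrt_one_sub_sq {x : ℝ} (hx : x ∈ Set.Icc (-1 : ℝ) 1) :
    (Real.sqrt (1 - x ^ 2) : ℂ) ^ 2 = 1 - (x : ℂ) ^ 2 := by
  have : 0 ≤ 1 - x ^ 2 := by nlinarith [hx.1, hx.2]
  exact_mod_cast Real.sq_sqrt this

lemma Wosc_sq_apply_self {x : ℝ} (hx : x ∈ Set.Icc (-1 : ℝ) 1) (i : Fin 2) :
    (Wosc x ^ 2) i i = 2 * (x : ℂ) ^ 2 - 1 := by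
  have hs := sq_ofReal_sqrt_one_sub_sq hx
  rw [sq]
  fin_cases i <;>
  · simp [Wosc, mul_apply]
    grind [Complex.I_sq]

lemma qspU_zero_phases (d : ℕ) (x : ℝ) : qspU (fun _ : Fin (d + 1) => 0) x = Wosc x ^ d := by
  simp [qspU, Zrot_zero, List.ofFn_const, List.prod_replicate]

lemma nestedU_zero_phases {n : ℕ} (m : ℕ) (Φ0 : Fin (n + 1) → ℝ) (x : ℝ) :
    nestedU (fun _ : Fin (m + 1) => 0) Φ0 x = qspU Φ0 x ^ m := by
  simp [nestedU, Zrot_zero, List.ofFn_const, List.prod_replicate]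

/-- If the polynomial embedded by `Φ0` is not real somewhere on
`[-1,1]`, then nesting fails to compose polynomials for some antisymmetric
outer protocol at some argument: antisymmetry (realness) of the inner protocol
is necessary for semantic embedding at all arguments. -/
theorem nonreal_inner_protocol_fails_to_compose (n : ℕ) (Φ0 : Fin (n + 1) → ℝ)
    (P0 : Polynomial ℂ)
    (hP0 : ∀ x ∈ Set.Icc (-1 : ℝ) 1, (qspU Φ0 x) 0 0 = P0.eval (x : ℂ))
    (hnonreal : ∃ x ∈ Set.Icc (-1 : ℝ) 1, (P0.eval (x : ℂ)).im ≠ 0) :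
    ∃ (m : ℕ) (Φ1 : Fin (m + 1) → ℝ) (P1 : Polynomial ℝ),
      Antisym Φ1 ∧
      (∀ x ∈ Set.Icc (-1 : ℝ) 1,
        (qspU Φ1 x) 0 0 = ((P1.eval x : ℝ) : ℂ) ∧
        (qspU Φ1 x) 1 1 = ((P1.eval x : ℝ) : ℂ)) ∧
      ∃ x ∈ Set.Icc (-1 : ℝ) 1,
        (nestedU Φ1 Φ0 x) 0 0 ≠ Polynomial.aeval (P0.eval (x : ℂ)) P1 := by
  obtain ⟨x0, hx0, him⟩ := hnonreal
  rw [← hP0 x0 hx0] at him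
  refine ⟨2, fun _ => 0, Chebyshev.T ℝ 2, fun _ => neg_zero.symm, fun x hx => ?_, x0, hx0, ?_⟩
  · simp [qspU_zero_phases, Wosc_sq_apply_self hx, Chebyshev.T_two]
  · rw [nestedU_zero_phases, ← hP0 x0 hx0, Chebyshev.T_two]
    intro h
    refine him (im_apply_zero_zero_eq_zero_of_sq_apply_zero_zero
      (qspU_mem_specialUnitaryGroup Φ0 hx0) ?_)
    simpa [map_ofNat] using h
end

section
/- Let d ≥ 1 and Φ = (φ_0, …, φ_d) ∈ ℝ^{d+1}. Define the shifted phase lists Φ^A := (φ_0 + π/2, φ_1, …, φ_{d−1}, φ_d − π/2) and Φ^S := (φ_0 + π/2, φ_1, …, φ_{d−1}, φ_d + π/2). Then for all x ∈ [-1,1]: U_{Φ^A}(x) = σ_z·U_Φ(x)·σ_z and U_{Φ^S}(x) = −σ_z·U_Φ(x)·σ_z. In particular, if U_Φ(x) has top-left entry P(x) and top-right entry i√(1−x²)·Q(x), then Φ^A realizes (P, −Q) and Φ^S realizes (−P, Q). -/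
open Matrix Polynomial

/-- The Pauli matrix σ_z. -/
def sigmaZ : Matrix (Fin 2) (Fin 2) ℂ := !![1, 0; 0, -1]

/-!
Z-rotations form a one-parameter group, `Z(a + b) = Z(a) Z(b)`, so adding `a` to the first
phase and `b` to the last one turns `U_Φ` into `Z(a) U_Φ Z(b)` (also for `d = 0`, where the two
phases coincide, because Z-rotations commute). Since `Z(±π/2) = ±i σ_z`, the two shifts give
`(i σ_z) U_Φ (∓i σ_z) = ±σ_z U_Φ σ_z`, and conjugation by `σ_z` keeps the diagonal entries
and negates the off-diagonal ones.
-/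

lemma Zrot_add (a b : ℝ) : Zrot (a + b) = Zrot a * Zrot b := by
  ext i j
  fin_cases i <;> fin_cases j <;>
    simp [Zrot, ← Complex.exp_add, mul_add, add_comm]

lemma Zrot_pi_div_two : Zrot (Real.pi / 2) = Complex.I • sigmaZ := by
  ext i j
  fin_cases i <;> fin_cases j <;>
    simp [Zrot, sigmaZ, mul_comm Complex.I, Complex.exp_neg, Complex.exp_pi_div_two_mul_I]

lemma Zrot_neg_pi_div_two : Zrot (-(Real.pi / 2)) = -Complex.I • sigmaZ := by
  ext i j
  fin_cases i <;> fin_cases j <;>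
    simp [Zrot, sigmaZ, mul_comm Complex.I, Complex.exp_neg, Complex.exp_pi_div_two_mul_I]

lemma qspU_add_first {d : ℕ} (Φ : Fin (d + 1) → ℝ) (a x : ℝ) :
    qspU (fun k => Φ k + if k.1 = 0 then a else 0) x = Zrot a * qspU Φ x := by
  simp [qspU, add_comm (Φ 0), Zrot_add, mul_assoc]

lemma qspU_add_last {d : ℕ} (Φ : Fin (d + 1) → ℝ) (b x : ℝ) :
    qspU (fun k => Φ k + if k.1 = d then b else 0) x = qspU Φ x * Zrot b := by
  cases d with
  | zero => simp [qspU, Zrot_add]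
  | succ e =>
    simp only [qspU, List.ofFn_succ', List.prod_concat]
    simp [Fin.val_succ, Zrot_add, mul_assoc, Fin.val_castSucc, (Fin.is_lt _).ne]

lemma sigmaZ_conj_apply_zero_zero (M : Matrix (Fin 2) (Fin 2) ℂ) :
    (sigmaZ * M * sigmaZ) 0 0 = M 0 0 := by
  simp [sigmaZ, Matrix.mul_apply, Matrix.vecMul, dotProduct, Fin.sum_univ_two]

lemma sigmaZ_conj_apply_zero_one (M : Matrix (Fin 2) (Fin 2) ℂ) :
    (sigmaZ * M * sigmaZ) 0 1 = -M 0 1 := by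
  simp [sigmaZ, Matrix.mul_apply, Matrix.vecMul, dotProduct, Fin.sum_univ_two]

lemma Zrot_pi_div_two_mul_mul_Zrot_neg (M : Matrix (Fin 2) (Fin 2) ℂ) :
    Zrot (Real.pi / 2) * M * Zrot (-(Real.pi / 2)) = sigmaZ * M * sigmaZ := by
  simp [Zrot_pi_div_two, Zrot_neg_pi_div_two, smul_smul]

lemma Zrot_pi_div_two_mul_mul_Zrot (M : Matrix (Fin 2) (Fin 2) ℂ) :
    Zrot (Real.pi / 2) * M * Zrot (Real.pi / 2) = -(sigmaZ * M * sigmaZ) := by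
  simp [Zrot_pi_div_two, smul_smul]

theorem qsp_phase_shift_symmetry_general (d : ℕ) (Φ : Fin (d + 1) → ℝ) :
    ∀ x ∈ Set.Icc (-1 : ℝ) 1,
      qspU (fun k => Φ k + (if k.1 = 0 then Real.pi / 2 else 0) +
          (if k.1 = d then -(Real.pi / 2) else 0)) x =
        sigmaZ * qspU Φ x * sigmaZ ∧
      qspU (fun k => Φ k + (if k.1 = 0 then Real.pi / 2 else 0) +
          (if k.1 = d then Real.pi / 2 else 0)) x =
        -(sigmaZ * qspU Φ x * sigmaZ) ∧
      (qspU (fun k => Φ k + (if k.1 = 0 then Real.pi / 2 else 0) +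
          (if k.1 = d then -(Real.pi / 2) else 0)) x) 0 0 = (qspU Φ x) 0 0 ∧
      (qspU (fun k => Φ k + (if k.1 = 0 then Real.pi / 2 else 0) +
          (if k.1 = d then -(Real.pi / 2) else 0)) x) 0 1 = -((qspU Φ x) 0 1) ∧
      (qspU (fun k => Φ k + (if k.1 = 0 then Real.pi / 2 else 0) +
          (if k.1 = d then Real.pi / 2 else 0)) x) 0 0 = -((qspU Φ x) 0 0) ∧
      (qspU (fun k => Φ k + (if k.1 = 0 then Real.pi / 2 else 0) +
          (if k.1 = d then Real.pi / 2 else 0)) x) 0 1 = (qspU Φ x) 0 1 := by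
  intro x _
  have hA : qspU (fun k => Φ k + (if k.1 = 0 then Real.pi / 2 else 0) +
      (if k.1 = d then -(Real.pi / 2) else 0)) x = sigmaZ * qspU Φ x * sigmaZ := by
    rw [qspU_add_last, qspU_add_first, Zrot_pi_div_two_mul_mul_Zrot_neg]
  have hS : qspU (fun k => Φ k + (if k.1 = 0 then Real.pi / 2 else 0) +
      (if k.1 = d then Real.pi / 2 else 0)) x = -(sigmaZ * qspU Φ x * sigmaZ) := by
    rw [qspU_add_last, qspU_add_first, Zrot_pi_div_two_mul_mul_Zrot]
  refine ⟨hA, hS, ?_, ?_, ?_, ?_⟩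
  · rw [hA, sigmaZ_conj_apply_zero_zero]
  · rw [hA, sigmaZ_conj_apply_zero_one]
  · rw [hS, Matrix.neg_apply, sigmaZ_conj_apply_zero_zero]
  · rw [hS, Matrix.neg_apply, sigmaZ_conj_apply_zero_one, neg_neg]

/-- Shifting the first phase by `π/2` and the last phase by
`∓π/2` conjugates the QSP unitary by `σ_z` (up to sign); in particular the
shifted protocols realize `(P, -Q)` and `(-P, Q)` respectively. -/
theorem qsp_phase_shift_symmetry (d : ℕ) (hd : 1 ≤ d) (Φ : Fin (d + 1) → ℝ) :
    ∀ x ∈ Set.Icc (-1 : ℝ) 1,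
      qspU (fun k => Φ k + (if k.1 = 0 then Real.pi / 2 else 0) +
          (if k.1 = d then -(Real.pi / 2) else 0)) x =
        sigmaZ * qspU Φ x * sigmaZ ∧
      qspU (fun k => Φ k + (if k.1 = 0 then Real.pi / 2 else 0) +
          (if k.1 = d then Real.pi / 2 else 0)) x =
        -(sigmaZ * qspU Φ x * sigmaZ) ∧
      (qspU (fun k => Φ k + (if k.1 = 0 then Real.pi / 2 else 0) +
          (if k.1 = d then -(Real.pi / 2) else 0)) x) 0 0 = (qspU Φ x) 0 0 ∧
      (qspU (fun k => Φ k + (if k.1 = 0 then Real.pi / 2 else 0) +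
          (if k.1 = d then -(Real.pi / 2) else 0)) x) 0 1 = -((qspU Φ x) 0 1) ∧
      (qspU (fun k => Φ k + (if k.1 = 0 then Real.pi / 2 else 0) +
          (if k.1 = d then Real.pi / 2 else 0)) x) 0 0 = -((qspU Φ x) 0 0) ∧
      (qspU (fun k => Φ k + (if k.1 = 0 then Real.pi / 2 else 0) +
          (if k.1 = d then Real.pi / 2 else 0)) x) 0 1 = (qspU Φ x) 0 1 :=
  qsp_phase_shift_symmetry_general d Φ
end

section
/- (Jordan's lemma.) Let E be a finite-dimensional complex inner product space and let p and q be two orthogonal projections on E (self-adjoint idempotent linear maps). Then there exists a finite family of nonzero subspaces S_1, …, S_k of E that are pairwise orthogonal, whose direct sum is all of E, such that each S_j has dimension at most 2, each S_j is invariant under both p and q (p(S_j) ⊆ S_j and q(S_j) ⊆ S_j), and on each two-dimensional S_j the restrictions of p and q each have rank one. -/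
/-!
The operator `(p - q) ^ 2` commutes with `p` (and `q`), so `p` maps its eigenvectors to
eigenvectors; hence there is an eigenvector `v` that `p` either kills or fixes. Expanding
`(p - q) ^ 2 v = μ v` then expresses `p (q v)` through `v` and `q v`, so `span {v, q v}` is
invariant under `p` and `q`, and on it both restrict to rank one as soon as it is a plane.
As `p` and `q` are self-adjoint, the orthogonal complement of such a block is again
invariant, and induction on the dimension splits the space into orthogonal blocks.
-/

open Module Submodule

theorem IsIdempotentElem.commute_sub_sq {R : Type*} [Ring R] {p q : R}
    (hp : IsIdempotentElem p) (hq : IsIdempotentElem q) : Commute p ((p - q) ^ 2) := by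
  have hp' : p * p = p := hp.eq
  have hq' : q * q = q := hq.eq
  have h1 : p * (p - q) ^ 2 = p - p * q * p := by
    simp only [sq, mul_sub, sub_mul, ← mul_assoc, hp', hq']; abel
  have h2 : (p - q) ^ 2 * p = p - p * q * p := by
    simp only [sq, mul_sub, sub_mul, mul_assoc, hp', hq']; simp only [← mul_assoc]; abel
  exact h1.trans h2.symm

section JordanBlock

variable {K V : Type*} [Field K] [AddCommGroup V] [Module K V]

/-- The blocks of Jordan's lemma on two projections, unrelated to the blocks of the Jordan
normal form. -/
structure IsJordanBlock (p q : End K V) (S : Submodule K V) : Prop where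
  ne_bot : S ≠ ⊥
  finrank_le_two : finrank K S ≤ 2
  mem_invtSubmodule_left : S ∈ p.invtSubmodule
  mem_invtSubmodule_right : S ∈ q.invtSubmodule
  finrank_map_eq_one : finrank K S = 2 → finrank K (S.map p) = 1 ∧ finrank K (S.map q) = 1

theorem finrank_span_pair_le_two (x y : V) : finrank K (span K {x, y}) ≤ 2 := by
  classical
  calc finrank K (span K {x, y}) ≤ ({x, y} : Set V).toFinset.card := finrank_span_le_card _
    _ ≤ 2 := by simpa using Finset.card_le_two

theorem finrank_span_pair_eq_one {x y : V} (hx : x ≠ 0) (hy : y ∈ K ∙ x) :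
    finrank K (span K {x, y}) = 1 := by
  rw [Set.pair_comm, span_insert_eq_span hy, finrank_span_singleton hx]

theorem isJordanBlock_span_pair {p q : End K V} (hq : IsIdempotentElem q) {v : V} {μ : K}
    (hv : v ≠ 0) (hμ : ((p - q) ^ 2) v = μ • v) (hpv : p v = 0 ∨ p v = v) :
    IsJordanBlock p q (span K {v, q v}) := by
  have hqq : q (q v) = q v := congr($(hq.eq) v)
  have hvS : v ∈ span K {v, q v} := subset_span (by simp)
  have hqvS : q v ∈ span K {v, q v} := subset_span (by simp)
  have hμ' : p (p v) - p (q v) - q (p v) + q v = μ • v := by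
    rw [← hμ, sq, Module.End.mul_apply]
    simp only [LinearMap.sub_apply, map_sub, hqq]
    abel
  have hpS : p v ∈ span K {v, q v} ∧ p (q v) ∈ span K {v, q v} ∧
      (q v ∉ K ∙ v → finrank K (span K {p v, p (q v)}) = 1) := by
    rcases hpv with hpv | hpv
    · have hpqv : p (q v) = q v - μ • v := by
        simp only [hpv, map_zero] at hμ'
        linear_combination (norm := module) -hμ'
      refine ⟨hpv ▸ zero_mem _, hpqv ▸ sub_mem hqvS (smul_mem _ _ hvS), fun hqv ↦ ?_⟩
      rw [hpv, Set.pair_comm, hpqv]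
      refine finrank_span_pair_eq_one (sub_ne_zero.2 fun h ↦ hqv ?_) (zero_mem _)
      exact h ▸ smul_mem _ _ (mem_span_singleton_self v)
    · have hpqv : p (q v) = (1 - μ) • v := by
        simp only [hpv] at hμ'
        linear_combination (norm := module) -hμ'
      rw [hpv, hpqv]
      exact ⟨hvS, smul_mem _ _ hvS,
        fun _ ↦ finrank_span_pair_eq_one hv (smul_mem _ _ (mem_span_singleton_self v))⟩
  refine ⟨fun h ↦ hv (by simpa [h] using hvS), finrank_span_pair_le_two v (q v), ?_, ?_,
    fun h2 ↦ ?_⟩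
  · rw [Module.End.mem_invtSubmodule_iff_map_le, map_span, Set.image_pair, span_le]
    exact Set.insert_subset hpS.1 (Set.singleton_subset_iff.2 hpS.2.1)
  · rw [Module.End.mem_invtSubmodule_iff_map_le, map_span, Set.image_pair, span_le, hqq]
    exact Set.insert_subset hqvS (Set.singleton_subset_iff.2 hqvS)
  have hqv : q v ∉ K ∙ v := fun h ↦ by
    rw [finrank_span_pair_eq_one hv h] at h2; omega
  rw [map_span, map_span, Set.image_pair, Set.image_pair, hqq]
  exact ⟨hpS.2.2 hqv, finrank_span_pair_eq_one (fun h ↦ hqv (h ▸ zero_mem _))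
    (mem_span_singleton_self _)⟩

theorem exists_isJordanBlock_le [IsAlgClosed K] [FiniteDimensional K V] {p q : End K V}
    (hp : IsIdempotentElem p) (hq : IsIdempotentElem q) {W : Submodule K V} (hW : W ≠ ⊥)
    (hWp : W ∈ p.invtSubmodule) (hWq : W ∈ q.invtSubmodule) :
    ∃ S ≤ W, IsJordanBlock p q S := by
  have hWA : W ∈ ((p - q) ^ 2).invtSubmodule := by
    have h : W ∈ (p - q).invtSubmodule := fun x hx ↦
      (sub_mem (hWp hx) (hWq hx) : p x - q x ∈ W)
    rw [sq]
    exact fun _ hx ↦ h (h hx)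
  have : Nontrivial W := nontrivial_iff_ne_bot.2 hW
  obtain ⟨μ, hμ⟩ := Module.End.exists_eigenvalue (((p - q) ^ 2).restrict hWA)
  obtain ⟨w, hw⟩ := hμ.exists_hasEigenvector
  have hAw : ((p - q) ^ 2) w = μ • (w : V) := congr_arg Subtype.val hw.apply_eq_smul
  have hw0 : (w : V) ≠ 0 := by simpa using hw.2
  have hsub {v : V} (hv : v ∈ W) : span K {v, q v} ≤ W :=
    span_le.2 (Set.insert_subset hv (Set.singleton_subset_iff.2 (hWq hv)))
  by_cases hpw : p w = 0
  · exact ⟨_, hsub w.2, isJordanBlock_span_pair hq hw0 hAw (.inl hpw)⟩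
  · have hApw : ((p - q) ^ 2) (p w) = μ • p w := by
      rw [← Module.End.mul_apply, ← (hp.commute_sub_sq hq).eq, Module.End.mul_apply, hAw,
        map_smul]
    exact ⟨_, hsub (hWp w.2), isJordanBlock_span_pair hq hpw hApw (.inr congr($(hp.eq) w))⟩

end JordanBlock

section Orthogonal

variable {E : Type*} [NormedAddCommGroup E] [InnerProductSpace ℂ E] [FiniteDimensional ℂ E]

theorem exists_orthogonal_isJordanBlock_sup_eq {p q : End ℂ E} (hp : IsIdempotentElem p)
    (hq : IsIdempotentElem q) (hp' : p.IsSymmetric) (hq' : q.IsSymmetric)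
    {W : Submodule ℂ E} (hWp : W ∈ p.invtSubmodule) (hWq : W ∈ q.invtSubmodule) :
    ∃ s : Finset (Submodule ℂ E), (∀ S ∈ s, IsJordanBlock p q S) ∧
      (s : Set (Submodule ℂ E)).Pairwise (· ⟂ ·) ∧ s.sup id = W := by
  classical
  induction hn : finrank ℂ W using Nat.strong_induction_on generalizing W with | _ n ih
  rcases eq_or_ne W ⊥ with rfl | hW
  · exact ⟨∅, by simp, by simp, rfl⟩
  obtain ⟨S, hSW, hS⟩ := exists_isJordanBlock_le hp hq hW hWp hWq
  have hT : finrank ℂ ↥(Sᗮ ⊓ W) < n := by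
    have := finrank_add_inf_finrank_orthogonal hSW
    have : 0 < finrank ℂ S := finrank_pos_iff.2 (nontrivial_iff_ne_bot.2 hS.ne_bot)
    omega
  obtain ⟨s, hs, hsorth, hsup⟩ := ih _ hT
    (Module.End.invtSubmodule.inf_mem
      (hp'.orthogonalComplement_mem_invtSubmodule hS.mem_invtSubmodule_left) hWp)
    (Module.End.invtSubmodule.inf_mem
      (hq'.orthogonalComplement_mem_invtSubmodule hS.mem_invtSubmodule_right) hWq) rfl
  refine ⟨insert S s, Finset.forall_mem_insert _ _ _ |>.2 ⟨hS, hs⟩, ?_, ?_⟩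
  · rw [Finset.coe_insert, Set.pairwise_insert_of_symm]
    refine ⟨hsorth, fun T hT _ ↦ (isOrtho_orthogonal_right S).mono_right ?_⟩
    exact (Finset.le_sup (f := id) hT).trans (hsup.le.trans inf_le_left)
  · rw [Finset.sup_insert, hsup, id, sup_orthogonal_inf_of_hasOrthogonalProjection hSW]

end Orthogonal

/-- Jordan's lemma: two orthogonal projections on a
finite-dimensional complex inner product space admit a decomposition of the
space into pairwise-orthogonal nonzero invariant subspaces of dimension at
most 2, on each two-dimensional one of which both projections restrict to
rank-one maps. -/
theorem jordan_lemma (E : Type*) [NormedAddCommGroup E] [InnerProductSpace ℂ E]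
    [FiniteDimensional ℂ E] (p q : E →ₗ[ℂ] E)
    (hp1 : p ∘ₗ p = p) (hp2 : LinearMap.IsSymmetric p)
    (hq1 : q ∘ₗ q = q) (hq2 : LinearMap.IsSymmetric q) :
    ∃ (k : ℕ) (S : Fin k → Submodule ℂ E),
      (∀ j, S j ≠ ⊥) ∧
      (∀ i j, i ≠ j → ∀ u ∈ S i, ∀ v ∈ S j, (inner ℂ u v : ℂ) = 0) ∧
      (⨆ j, S j) = ⊤ ∧
      (∀ j, Module.finrank ℂ (S j) ≤ 2) ∧
      (∀ j, ∀ v ∈ S j, p v ∈ S j ∧ q v ∈ S j) ∧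
      (∀ j, Module.finrank ℂ (S j) = 2 →
        Module.finrank ℂ (Submodule.map p (S j)) = 1 ∧
        Module.finrank ℂ (Submodule.map q (S j)) = 1) := by
  obtain ⟨s, hs, hsorth, hsup⟩ := exists_orthogonal_isJordanBlock_sup_eq hp1 hq1 hp2 hq2
    (Module.End.invtSubmodule.top_mem p) (Module.End.invtSubmodule.top_mem q)
  let e := s.equivFin.symm
  have hS (j : Fin s.card) : IsJordanBlock p q (e j) := hs _ (e j).2
  refine ⟨s.card, fun j ↦ e j, fun j ↦ (hS j).ne_bot, fun i j hij ↦ ?_, ?_,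
    fun j ↦ (hS j).finrank_le_two,
    fun j v hv ↦ ⟨(hS j).mem_invtSubmodule_left hv, (hS j).mem_invtSubmodule_right hv⟩,
    fun j ↦ (hS j).finrank_map_eq_one⟩
  · exact isOrtho_iff_inner_eq.1 <|
      hsorth (e i).2 (e j).2 (Subtype.coe_injective.ne (e.injective.ne hij))
  · rw [e.iSup_comp (g := fun T : s ↦ (T : Submodule ℂ E)), ← hsup, Finset.sup_eq_iSup,
      iSup_subtype']
    rfl
end

section
/- For every d ≥ 1 and every phase list Φ ∈ ℝ^{d+1} there exist complex polynomials P and Q with deg P ≤ d, deg Q ≤ d−1, P of parity d mod 2, Q of parity (d−1) mod 2, and |P(x)|² + (1−x²)·|Q(x)|² = 1 for all x ∈ [-1,1], such that for all x ∈ [-1,1], U_Φ(x) equals the 2×2 matrix with top-left entry P(x), top-right entry i√(1−x²)·Q(x), bottom-left entry i√(1−x²)·conj(Q(x)), and bottom-right entry conj(P(x)). -/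
/-!
Right multiplication by `W(x) Z(φ)` preserves the shape
`[[p, i s q], [i s q̄, p̄]]`, `s = √(1 - x²)`, sending `(p, q)` to
`(e^{iφ} (x p - (1 - x²) q), e^{-iφ} (p + x q))`. Iterating this recursion on polynomials from
`(P, Q) = (e^{iφ₀}, 0)` produces `P` and `Q`, and degree and parity bounds propagate through each
step. The norm identity is `det U_Φ(x) = 1`, since `Z(φ)` and `W(x)` have determinant one.
-/

open Matrix Polynomial

open Complex ComplexConjugate Set

section Parity

variable {R : Type*} {m n : ℕ}

theorem HasParity.of_mod_two_eq [Semiring R] {P : R[X]} (h : HasParity m P)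
    (hmn : m % 2 = n % 2) : HasParity n P :=
  fun k hk => h k (hmn ▸ hk)

theorem HasParity.add [Semiring R] {P Q : R[X]} (hP : HasParity m P) (hQ : HasParity m Q) :
    HasParity m (P + Q) := fun k hk => by
  rw [coeff_add, hP k hk, hQ k hk, add_zero]

theorem HasParity.sub [Ring R] {P Q : R[X]} (hP : HasParity m P) (hQ : HasParity m Q) :
    HasParity m (P - Q) := fun k hk => by
  rw [coeff_sub, hP k hk, hQ k hk, sub_zero]

theorem HasParity.mul [Semiring R] {P Q : R[X]} (hP : HasParity m P) (hQ : HasParity n Q) :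
    HasParity (m + n) (P * Q) := fun k hk => by
  rw [coeff_mul]
  refine Finset.sum_eq_zero fun ij hij => ?_
  rw [Finset.HasAntidiagonal.mem_antidiagonal] at hij
  by_cases hi : ij.1 % 2 = m % 2
  · rw [hQ ij.2 (by omega), mul_zero]
  · rw [hP ij.1 hi, zero_mul]

theorem hasParity_zero [Semiring R] : HasParity m (0 : R[X]) :=
  fun k _ => coeff_zero k

theorem hasParity_C [Semiring R] (a : R) : HasParity 0 (C a) := fun k hk => by
  rw [coeff_C, if_neg (by omega)]

theorem hasParity_X [Semiring R] : HasParity 1 (X : R[X]) := fun k hk => by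
  rw [coeff_X, if_neg (by omega)]

theorem hasParity_one_sub_X_sq [Ring R] : HasParity 0 (1 - X ^ 2 : R[X]) := fun k hk => by
  rw [coeff_sub, coeff_one, coeff_X_pow, if_neg (by omega), if_neg (by omega), sub_zero]

end Parity

theorem X_mul_mem_degreeLT {R : Type*} [Semiring R] {n : ℕ} {P : R[X]}
    (hP : P ∈ degreeLT R n) : X * P ∈ degreeLT R (n + 1) := by
  rw [mem_degreeLT, degree_lt_iff_coeff_zero] at *
  intro k hk
  cases k with
  | zero => exact coeff_X_mul_zero P
  | succ k => rw [coeff_X_mul]; exact hP k (by omega)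

theorem conj_exp_I_mul_ofReal (φ : ℝ) : conj (exp (I * φ)) = exp (-(I * φ)) := by
  rw [← exp_conj]
  simp

theorem I_mul_sqrt_one_sub_sq_sq {x : ℝ} (hx : x ∈ Icc (-1 : ℝ) 1) :
    (I * (√(1 - x ^ 2) : ℂ)) ^ 2 = (x : ℂ) ^ 2 - 1 := by
  have h : 0 ≤ 1 - x ^ 2 := by
    rw [sub_nonneg, sq_le_one_iff_abs_le_one]
    exact abs_le.2 hx
  rw [mul_pow, I_sq, ← ofReal_pow, Real.sq_sqrt h]
  push_cast
  ring

theorem det_Zrot (φ : ℝ) : (Zrot φ).det = 1 := by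
  rw [Zrot, det_fin_two_of, mul_zero, sub_zero, ← exp_add, add_neg_cancel, exp_zero]

theorem det_Wosc {x : ℝ} (hx : x ∈ Icc (-1 : ℝ) 1) : (Wosc x).det = 1 := by
  rw [Wosc, det_fin_two_of]
  linear_combination -I_mul_sqrt_one_sub_sq_sq hx

theorem det_qspU {d : ℕ} (Φ : Fin (d + 1) → ℝ) {x : ℝ} (hx : x ∈ Icc (-1 : ℝ) 1) :
    (qspU Φ x).det = 1 := by
  rw [qspU, det_mul, det_Zrot, one_mul]
  refine List.prod_induction (fun A : Matrix (Fin 2) (Fin 2) ℂ => A.det = 1) (fun A B hA hB => ?_) det_one fun A hA => ?_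
  · rw [det_mul, hA, hB, one_mul]
  · obtain ⟨k, rfl⟩ := List.mem_ofFn.1 hA
    rw [det_mul, det_Wosc hx, det_Zrot, one_mul]

theorem qspU_succ {d : ℕ} (Φ : Fin (d + 2) → ℝ) (x : ℝ) :
    qspU Φ x = qspU (fun k => Φ k.castSucc) x * (Wosc x * Zrot (Φ (Fin.last (d + 1)))) := by
  rw [qspU, qspU, List.ofFn_succ', List.concat_eq_append, List.prod_append, List.prod_singleton,
    ← mul_assoc]
  simp only [Fin.castSucc_zero, Fin.succ_castSucc, Fin.succ_last]

noncomputable def qspBlock (x : ℝ) (p q : ℂ) : Matrix (Fin 2) (Fin 2) ℂ :=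
  !![p, I * (√(1 - x ^ 2) : ℂ) * q; I * (√(1 - x ^ 2) : ℂ) * conj q, conj p]

theorem det_qspBlock {x : ℝ} (hx : x ∈ Icc (-1 : ℝ) 1) (p q : ℂ) :
    (qspBlock x p q).det = ((normSq p + (1 - x ^ 2) * normSq q : ℝ) : ℂ) := by
  rw [qspBlock, det_fin_two_of]
  push_cast
  rw [← mul_conj, ← mul_conj]
  linear_combination (-q * conj q) * I_mul_sqrt_one_sub_sq_sq hx

theorem Zrot_eq_qspBlock (φ : ℝ) (x : ℝ) : Zrot φ = qspBlock x (exp (I * φ)) 0 := by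
  rw [Zrot, qspBlock, conj_exp_I_mul_ofReal, map_zero, mul_zero]

theorem qspBlock_mul_Wosc_mul_Zrot {x : ℝ} (hx : x ∈ Icc (-1 : ℝ) 1) (p q : ℂ) (φ : ℝ) :
    qspBlock x p q * (Wosc x * Zrot φ) =
      qspBlock x (exp (I * φ) * (x * p - (1 - x ^ 2) * q))
        (exp (-(I * φ)) * (p + x * q)) := by
  have hs := I_mul_sqrt_one_sub_sq_sq hx
  have hconj : conj (exp (-(I * φ))) = exp (I * φ) := by
    rw [← conj_exp_I_mul_ofReal, conj_conj]
  simp only [qspBlock, Wosc, Zrot, mul_fin_two, map_mul, map_sub, map_add, map_one, map_pow,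
    conj_ofReal, conj_exp_I_mul_ofReal, hconj]
  ext i j
  fin_cases i <;> fin_cases j <;> simp only [of_apply, cons_val', cons_val_zero, cons_val_one,
    empty_val', cons_val_fin_one, Fin.zero_eta, Fin.mk_one, Fin.isValue]
  · linear_combination (exp (I * φ) * q) * hs
  · ring
  · ring
  · linear_combination (exp (-(I * φ)) * conj q) * hs

noncomputable def qspStep (φ : ℝ) (PQ : ℂ[X] × ℂ[X]) : ℂ[X] × ℂ[X] :=
  (C (exp (I * φ)) * (X * PQ.1 - (1 - X ^ 2) * PQ.2), C (exp (-(I * φ))) * (PQ.1 + X * PQ.2))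

noncomputable def qspPolys : {d : ℕ} → (Fin (d + 1) → ℝ) → ℂ[X] × ℂ[X]
  | 0, Φ => (C (exp (I * Φ 0)), 0)
  | _ + 1, Φ => qspStep (Φ (Fin.last _)) (qspPolys fun k => Φ k.castSucc)

theorem qspPolys_mem_degreeLT {d : ℕ} (Φ : Fin (d + 1) → ℝ) :
    (qspPolys Φ).1 ∈ degreeLT ℂ (d + 1) ∧ (qspPolys Φ).2 ∈ degreeLT ℂ d := by
  induction d with
  | zero =>
    simp only [qspPolys, mem_degreeLT, Submodule.zero_mem, and_true]
    exact degree_C_le.trans_lt (by norm_num)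
  | succ d ih =>
    obtain ⟨hP, hQ⟩ := ih fun k => Φ k.castSucc
    rw [qspPolys, qspStep, C_mul', C_mul']
    generalize qspPolys (fun k => Φ k.castSucc) = PQ at hP hQ ⊢
    have hX2Q : (1 - X ^ 2) * PQ.2 ∈ degreeLT ℂ (d + 2) := by
      rw [sub_mul, one_mul, sq, mul_assoc]
      exact sub_mem (degreeLT_mono (by omega) hQ) (X_mul_mem_degreeLT (X_mul_mem_degreeLT hQ))
    exact ⟨Submodule.smul_mem _ _ (sub_mem (X_mul_mem_degreeLT hP) hX2Q),
      Submodule.smul_mem _ _ (add_mem hP (X_mul_mem_degreeLT hQ))⟩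

theorem hasParity_qspPolys {d : ℕ} (Φ : Fin (d + 1) → ℝ) :
    HasParity d (qspPolys Φ).1 ∧ HasParity (d + 1) (qspPolys Φ).2 := by
  induction d with
  | zero => exact ⟨hasParity_C _, hasParity_zero⟩
  | succ d ih =>
    obtain ⟨hP, hQ⟩ := ih fun k => Φ k.castSucc
    have hXP := hasParity_X.mul hP
    have hXQ := hasParity_X.mul hQ
    have hX2Q := hasParity_one_sub_X_sq.mul hQ
    refine ⟨((hasParity_C _).mul (hXP.sub (hX2Q.of_mod_two_eq ?_))).of_mod_two_eq ?_,
      ((hasParity_C _).mul (hP.add (hXQ.of_mod_two_eq ?_))).of_mod_two_eq ?_⟩ <;> omega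

theorem qspU_eq_qspBlock {d : ℕ} (Φ : Fin (d + 1) → ℝ) {x : ℝ} (hx : x ∈ Icc (-1 : ℝ) 1) :
    qspU Φ x = qspBlock x ((qspPolys Φ).1.eval (x : ℂ)) ((qspPolys Φ).2.eval (x : ℂ)) := by
  induction d with
  | zero =>
    rw [qspU, List.ofFn_zero, List.prod_nil, mul_one, Zrot_eq_qspBlock _ x]
    simp [qspPolys]
  | succ d ih =>
    rw [qspU_succ, ih, qspBlock_mul_Wosc_mul_Zrot hx, qspPolys, qspStep]
    simp

/-- forward direction of QSP: every QSP phase list embeds a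
pair of polynomials `(P, Q)` of the stated degrees, parities and norm
condition in the unitary `U_Φ(x)`. -/
theorem qsp_forward (d : ℕ) (hd : 1 ≤ d) (Φ : Fin (d + 1) → ℝ) :
    ∃ P Q : Polynomial ℂ,
      P.degree ≤ (d : WithBot ℕ) ∧ Q.degree ≤ ((d - 1 : ℕ) : WithBot ℕ) ∧
      HasParity d P ∧ HasParity (d - 1) Q ∧
      (∀ x ∈ Set.Icc (-1 : ℝ) 1,
        Complex.normSq (P.eval (x : ℂ)) +
          (1 - x ^ 2) * Complex.normSq (Q.eval (x : ℂ)) = 1) ∧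
      ∀ x ∈ Set.Icc (-1 : ℝ) 1,
        qspU Φ x =
          !![P.eval (x : ℂ),
             Complex.I * (Real.sqrt (1 - x ^ 2) : ℂ) * Q.eval (x : ℂ);
             Complex.I * (Real.sqrt (1 - x ^ 2) : ℂ) *
               (starRingEnd ℂ) (Q.eval (x : ℂ)),
             (starRingEnd ℂ) (P.eval (x : ℂ))] := by
  obtain ⟨hPdeg, hQdeg⟩ := qspPolys_mem_degreeLT Φ
  obtain ⟨hPpar, hQpar⟩ := hasParity_qspPolys Φ
  rw [degreeLT_succ_eq_degreeLE, mem_degreeLE] at hPdeg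
  replace hQdeg : (qspPolys Φ).2 ∈ degreeLE ℂ (d - 1 : ℕ) := by
    rwa [← degreeLT_succ_eq_degreeLE, Nat.sub_add_cancel hd]
  rw [mem_degreeLE] at hQdeg
  refine ⟨_, _, hPdeg, hQdeg, hPpar, hQpar.of_mod_two_eq (by omega), fun x hx => ?_,
    fun x hx => qspU_eq_qspBlock Φ hx⟩
  have hdet := det_qspU Φ hx
  rw [qspU_eq_qspBlock Φ hx, det_qspBlock hx] at hdet
  exact_mod_cast hdet
end
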